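/- arXiv:1506.05828 — 3 statements merged into one kernel-verified Lean document; each statement's English description precedes it below -/
import Mathlib

section
/- In the Mirollo–Strogatz model with f strictly increasing and strictly concave (f′ > 0, f″ < 0, f(0)=0, f(1)=1) and firing map h(φ) = g(ε + f(1−φ)) with g = f⁻¹, the derivative of the firing map satisfies h′(φ) < −1 on the domain (δ, h⁻¹(δ)). Consequently F(φ) := φ − h(φ) satisfies F′(φ) > 2. -/
/-- Mirollo–Strogatz with strictly concave `f`: on the domain
`(δ, h⁻¹(δ))` (i.e. `δ < φ < 1` with `δ < h(φ)`), the firing map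
`h(φ) = g(ε + f(1−φ))` has derivative `h′(φ) < −1`; consequently
`F(φ) = φ − h(φ)` satisfies `F′(φ) = 1 − h′(φ) > 2`. -/
theorem stmt6 (f g f' f'' : ℝ → ℝ) (ε δ : ℝ)
    (hf0 : f 0 = 0) (hf1 : f 1 = 1)
    (hfd : ∀ φ ∈ Set.Icc (0:ℝ) 1, HasDerivAt f (f' φ) φ)
    (hf'pos : ∀ φ ∈ Set.Icc (0:ℝ) 1, 0 < f' φ)
    (hfd2 : ∀ φ ∈ Set.Icc (0:ℝ) 1, HasDerivAt f' (f'' φ) φ)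
    (hf''neg : ∀ φ ∈ Set.Icc (0:ℝ) 1, f'' φ < 0)
    (hmap : ∀ φ ∈ Set.Icc (0:ℝ) 1, f φ ∈ Set.Icc (0:ℝ) 1)
    (hg : ∀ y ∈ Set.Icc (0:ℝ) 1, g y ∈ Set.Icc (0:ℝ) 1 ∧ f (g y) = y)
    (hgf : ∀ φ ∈ Set.Icc (0:ℝ) 1, g (f φ) = φ)
    (hε : ε ∈ Set.Ioo (0:ℝ) 1)
    (hδ : δ = 1 - g (1 - ε)) :
    ∀ φ : ℝ, δ < φ → φ < 1 → δ < g (ε + f (1 - φ)) →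
      ∃ d : ℝ, HasDerivAt (fun ψ => g (ε + f (1 - ψ))) d φ ∧ d < -1 ∧
        HasDerivAt (fun ψ => ψ - g (ε + f (1 - ψ))) (1 - d) φ ∧ 2 < 1 - d := by
  obtain ⟨hε0, hε1⟩ := hε
  -- f is strictly monotone on [0,1]
  have hconv : Convex ℝ (Set.Icc (0:ℝ) 1) := convex_Icc 0 1
  have hcontf : ContinuousOn f (Set.Icc (0:ℝ) 1) :=
    fun x hx => ((hfd x hx).continuousAt).continuousWithinAt
  have smono : StrictMonoOn f (Set.Icc (0:ℝ) 1) := by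
    apply strictMonoOn_of_deriv_pos hconv hcontf
    intro x hx
    rw [interior_Icc] at hx
    have hx' : x ∈ Set.Icc (0:ℝ) 1 := ⟨le_of_lt hx.1, le_of_lt hx.2⟩
    rw [(hfd x hx').deriv]
    exact hf'pos x hx'
  -- f' is strictly antitone on [0,1]
  have santi : StrictAntiOn f' (Set.Icc (0:ℝ) 1) := by
    apply strictAntiOn_of_deriv_neg hconv
      (fun x hx => ((hfd2 x hx).continuousAt).continuousWithinAt)
    intro x hx
    rw [interior_Icc] at hx
    have hx' : x ∈ Set.Icc (0:ℝ) 1 := ⟨le_of_lt hx.1, le_of_lt hx.2⟩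
    rw [(hfd2 x hx').deriv]
    exact hf''neg x hx'
  -- g is strictly monotone on [0,1]
  have gmono : StrictMonoOn g (Set.Icc (0:ℝ) 1) := by
    intro a ha b hb hab
    by_contra hle
    push_neg at hle
    have : f (g b) ≤ f (g a) :=
      smono.monotoneOn (hg b hb).1 (hg a ha).1 hle
    rw [(hg a ha).2, (hg b hb).2] at this
    linarith
  have h01 : (0:ℝ) ≤ 1 := by norm_num
  intro φ hδφ hφ1 hδh
  have hg1ε := hg (1 - ε) ⟨by linarith, by linarith⟩
  have hg1ε_lt : g (1 - ε) < 1 := by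
    rcases lt_or_eq_of_le hg1ε.1.2 with h | h
    · exact h
    · rw [h] at hg1ε; rw [hf1] at hg1ε; linarith [hg1ε.2]
  have hδpos : 0 < δ := by rw [hδ]; linarith
  have hφpos : 0 < φ := lt_trans hδpos hδφ
  have h1φ : (1 - φ) ∈ Set.Icc (0:ℝ) 1 := ⟨by linarith, by linarith⟩
  have hf1φ_mem := hmap (1 - φ) h1φ
  have hf1φ_lt : f (1 - φ) < 1 - ε := by
    have : f (1 - φ) < f (g (1 - ε)) := by
      apply smono h1φ hg1ε.1
      rw [hδ] at hδφ; linarith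
    rwa [hg1ε.2] at this
  set y : ℝ := ε + f (1 - φ) with hy
  have hy0 : 0 < y := by have := hf1φ_mem.1; simp only [hy]; linarith
  have hy1 : y < 1 := by simp only [hy]; linarith
  have hymem : y ∈ Set.Icc (0:ℝ) 1 := ⟨le_of_lt hy0, le_of_lt hy1⟩
  have hgy := hg y hymem
  have hgy0 : 0 < g y := by
    rcases lt_or_eq_of_le hgy.1.1 with h | h
    · exact h
    · exfalso; rw [← h] at hgy; rw [hf0] at hgy; linarith [hgy.2]
  have hgy1 : g y < 1 := by
    rcases lt_or_eq_of_le hgy.1.2 with h | h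
    · exact h
    · exfalso; rw [h] at hgy; rw [hf1] at hgy; linarith [hgy.2]
  -- continuity of g at y
  have hcontg : ContinuousAt g y := by
    apply gmono.continuousAt_of_image_mem_nhds (Icc_mem_nhds hy0 hy1)
    have hsub : Set.Icc (0:ℝ) 1 ⊆ g '' Set.Icc (0:ℝ) 1 := by
      intro x hx
      exact ⟨f x, hmap x hx, hgf x hx⟩
    exact Filter.mem_of_superset (Icc_mem_nhds hgy0 hgy1) hsub
  -- derivative of g at y
  have gderiv : HasDerivAt g (f' (g y))⁻¹ y := by
    apply HasDerivAt.of_local_left_inverse hcontg (hfd (g y) hgy.1)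
      (ne_of_gt (hf'pos (g y) hgy.1))
    filter_upwards [Ioo_mem_nhds hy0 hy1] with x hx
    exact (hg x ⟨le_of_lt hx.1, le_of_lt hx.2⟩).2
  -- derivative of inner function
  have inner : HasDerivAt (fun ψ : ℝ => ε + f (1 - ψ)) (f' (1 - φ) * (-1)) φ := by
    have h1 : HasDerivAt (fun ψ : ℝ => 1 - ψ) (-1) φ := (hasDerivAt_id φ).const_sub 1
    exact ((hfd (1 - φ) h1φ).comp φ h1).const_add ε
  have total : HasDerivAt (fun ψ : ℝ => g (ε + f (1 - ψ)))
      ((f' (g y))⁻¹ * (f' (1 - φ) * (-1))) φ := gderiv.comp φ inner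
  set d : ℝ := (f' (g y))⁻¹ * (f' (1 - φ) * (-1)) with hd
  -- g y > 1 - φ
  have hgygt : 1 - φ < g y := by
    by_contra hle
    push_neg at hle
    have : f (g y) ≤ f (1 - φ) := smono.monotoneOn hgy.1 h1φ hle
    rw [hgy.2] at this
    simp only [hy] at this
    linarith
  have hA : 0 < f' (1 - φ) := hf'pos (1 - φ) h1φ
  have hB : 0 < f' (g y) := hf'pos (g y) hgy.1
  have hBA : f' (g y) < f' (1 - φ) := santi h1φ hgy.1 hgygt
  have hdlt : d < -1 := by
    rw [hd]
    have h1 : 1 < f' (1 - φ) / f' (g y) := (one_lt_div hB).2 hBA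
    have : (f' (g y))⁻¹ * (f' (1 - φ) * (-1)) = -(f' (1 - φ) / f' (g y)) := by
      field_simp
    rw [this]
    linarith
  exact ⟨d, total, hdlt, (hasDerivAt_id φ).sub total, by linarith⟩
end

section
/- In the Mirollo–Strogatz model, the function F(φ) = φ − h(φ) with h(φ) = g(ε+f(1−φ)) satisfies F(δ) = δ − 1 < 0 and F(h⁻¹(δ)) = h⁻¹(δ) − δ > 0, and since F′ > 2 > 0, F has a unique root φ̄ in (δ, h⁻¹(δ)); hence the return map R = h ∘ h has a unique fixed point in (δ, h⁻¹(δ)). -/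
/-- Mirollo–Strogatz: `F(φ) = φ − h(φ)` satisfies `F(δ) = δ − 1 < 0` (since `h(δ) = 1`)
and `F(h⁻¹(δ)) = h⁻¹(δ) − δ > 0`; hence `F` has a unique root in `(δ, h⁻¹(δ))`,
and the return map `R = h ∘ h` has a unique fixed point in `(δ, h⁻¹(δ))`. -/
theorem stmt7 (f g f' f'' : ℝ → ℝ) (ε δ ψ : ℝ)
    (hf0 : f 0 = 0) (hf1 : f 1 = 1)
    (hfd : ∀ φ ∈ Set.Icc (0:ℝ) 1, HasDerivAt f (f' φ) φ)
    (hf'pos : ∀ φ ∈ Set.Icc (0:ℝ) 1, 0 < f' φ)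
    (hfd2 : ∀ φ ∈ Set.Icc (0:ℝ) 1, HasDerivAt f' (f'' φ) φ)
    (hf''neg : ∀ φ ∈ Set.Icc (0:ℝ) 1, f'' φ < 0)
    (hmap : ∀ φ ∈ Set.Icc (0:ℝ) 1, f φ ∈ Set.Icc (0:ℝ) 1)
    (hg : ∀ y ∈ Set.Icc (0:ℝ) 1, g y ∈ Set.Icc (0:ℝ) 1 ∧ f (g y) = y)
    (hgf : ∀ φ ∈ Set.Icc (0:ℝ) 1, g (f φ) = φ)
    (hε : ε ∈ Set.Ioo (0:ℝ) 1)
    (hδ : δ = 1 - g (1 - ε))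
    (hψ₁ : δ < ψ) (hψ₂ : ψ < 1)
    (hψ : g (ε + f (1 - ψ)) = δ) :
    g (ε + f (1 - δ)) = 1 ∧ δ - g (ε + f (1 - δ)) < 0 ∧ 0 < ψ - δ ∧
    (∃! φ, φ ∈ Set.Ioo δ ψ ∧ φ - g (ε + f (1 - φ)) = 0) ∧
    (∃! φ, φ ∈ Set.Ioo δ ψ ∧ g (ε + f (1 - g (ε + f (1 - φ)))) = φ) := by
  obtain ⟨hε0, hε1⟩ := hε
  have h01 : (0:ℝ) ∈ Set.Icc (0:ℝ) 1 := by norm_num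
  have h11 : (1:ℝ) ∈ Set.Icc (0:ℝ) 1 := by norm_num
  have hfc : ContinuousOn f (Set.Icc 0 1) :=
    fun x hx => (hfd x hx).continuousAt.continuousWithinAt
  have hfmono : StrictMonoOn f (Set.Icc 0 1) := by
    apply strictMonoOn_of_deriv_pos (convex_Icc 0 1) hfc
    intro x hx
    rw [interior_Icc] at hx
    rw [(hfd x (Set.Ioo_subset_Icc_self hx)).deriv]
    exact hf'pos x (Set.Ioo_subset_Icc_self hx)
  have hf'anti : StrictAntiOn f' (Set.Icc 0 1) := by
    apply strictAntiOn_of_deriv_neg (convex_Icc 0 1)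
      (fun x hx => (hfd2 x hx).continuousAt.continuousWithinAt)
    intro x hx
    rw [interior_Icc] at hx
    rw [(hfd2 x (Set.Ioo_subset_Icc_self hx)).deriv]
    exact hf''neg x (Set.Ioo_subset_Icc_self hx)
  have hgmem : ∀ y ∈ Set.Icc (0:ℝ) 1, g y ∈ Set.Icc (0:ℝ) 1 := fun y hy => (hg y hy).1
  have hfg : ∀ y ∈ Set.Icc (0:ℝ) 1, f (g y) = y := fun y hy => (hg y hy).2
  have hg1 : g 1 = 1 := by have := hgf 1 h11; rwa [hf1] at this
  have hg0 : g 0 = 0 := by have := hgf 0 h01; rwa [hf0] at this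
  have hgmono : StrictMonoOn g (Set.Icc 0 1) := by
    intro y1 h1 y2 h2 hlt
    by_contra hle
    push_neg at hle
    have := hfmono.monotoneOn (hgmem y2 h2) (hgmem y1 h1) hle
    rw [hfg y1 h1, hfg y2 h2] at this
    exact absurd this (not_le.mpr hlt)
  have h1εI : (1 - ε) ∈ Set.Icc (0:ℝ) 1 := ⟨by linarith, by linarith⟩
  have hg1ε0 : 0 < g (1 - ε) := by
    have := hgmono h01 h1εI (by linarith); rwa [hg0] at this
  have hg1ε1 : g (1 - ε) < 1 := by
    have := hgmono h1εI h11 (by linarith); rwa [hg1] at this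
  have hδ0 : 0 < δ := by rw [hδ]; linarith
  have hδ1 : δ < 1 := by rw [hδ]; linarith
  have h1δ : 1 - δ = g (1 - ε) := by rw [hδ]; ring
  -- domain facts
  have hdom : ∀ φ : ℝ, δ ≤ φ → φ ≤ 1 →
      (1 - φ ∈ Set.Icc (0:ℝ) 1) ∧ ε + f (1 - φ) ∈ Set.Icc (0:ℝ) 1 := by
    intro φ h1 h2
    have hm : 1 - φ ∈ Set.Icc (0:ℝ) 1 := ⟨by linarith, by linarith⟩
    refine ⟨hm, ?_⟩
    have hfm := hmap (1 - φ) hm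
    have h1δI : (1 - δ) ∈ Set.Icc (0:ℝ) 1 := ⟨by linarith, by linarith⟩
    have hle : f (1 - φ) ≤ f (1 - δ) := hfmono.monotoneOn hm h1δI (by linarith)
    have : f (1 - δ) = 1 - ε := by rw [h1δ]; exact hfg _ h1εI
    constructor
    · linarith [hfm.1]
    · linarith
  -- value at δ
  have hval1 : g (ε + f (1 - δ)) = 1 := by
    have e1 : ε + f (1 - δ) = 1 := by
      rw [h1δ, hfg _ h1εI]; ring
    rw [e1, hg1]
  -- strict antitonicity of h on [δ,1]
  have hanti : ∀ a b : ℝ, δ ≤ a → a < b → b ≤ 1 →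
      g (ε + f (1 - b)) < g (ε + f (1 - a)) := by
    intro a b ha hab hb
    have hma := (hdom a ha (by linarith)).1
    have hmb := (hdom b (by linarith) hb).1
    have hfab : f (1 - b) < f (1 - a) := hfmono hmb hma (by linarith)
    exact hgmono (hdom b (by linarith) hb).2 (hdom a ha (by linarith)).2 (by linarith)
  -- continuity of g at interior points
  have hgca : ∀ a : ℝ, 0 < a → a < 1 → ContinuousAt g a := by
    intro a ha0 ha1
    have haI : a ∈ Set.Icc (0:ℝ) 1 := ⟨ha0.le, ha1.le⟩
    have hga0 : 0 < g a := by have := hgmono h01 haI ha0; rwa [hg0] at this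
    have hga1 : g a < 1 := by have := hgmono haI h11 ha1; rwa [hg1] at this
    apply hgmono.continuousAt_of_exists_between (Icc_mem_nhds ha0 ha1)
    · intro b hb
      have hmem : max b 0 ∈ Set.Icc (0:ℝ) 1 :=
        ⟨le_max_right _ _, max_le (by linarith) (by norm_num)⟩
      refine ⟨f (max b 0), hmap _ hmem, ?_, ?_⟩
      · rw [hgf _ hmem]; exact le_max_left _ _
      · rw [hgf _ hmem]; exact max_lt hb hga0
    · intro b hb
      have hmem : min b 1 ∈ Set.Icc (0:ℝ) 1 :=
        ⟨le_min (by linarith [hga0]) (by norm_num), min_le_right _ _⟩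
      refine ⟨f (min b 1), hmap _ hmem, ?_, ?_⟩
      · rw [hgf _ hmem]; exact lt_min hb hga1
      · rw [hgf _ hmem]; exact min_le_left _ _
  -- continuity of g on [ε, 1]
  have hgcont : ContinuousOn g (Set.Icc ε 1) := by
    intro a ha
    rcases lt_or_eq_of_le ha.2 with h1 | h1
    · exact (hgca a (lt_of_lt_of_le hε0 ha.1) h1).continuousWithinAt
    · subst h1
      have : ContinuousWithinAt g (Set.Iic 1) 1 := by
        apply hgmono.continuousWithinAt_left_of_exists_between
          (Icc_mem_nhdsLE_of_mem (Set.mem_Ioc.mpr ⟨by norm_num, le_refl 1⟩))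
        intro b hb
        rw [hg1] at hb
        have hmem : max b 0 ∈ Set.Icc (0:ℝ) 1 :=
          ⟨le_max_right _ _, max_le (by linarith) (by norm_num)⟩
        refine ⟨f (max b 0), hmap _ hmem, ?_, ?_⟩
        · rw [hgf _ hmem]; exact le_max_left _ _
        · rw [hgf _ hmem, hg1]; exact max_lt hb (by norm_num)
      exact this.mono (Set.Icc_subset_Iic_self)
  -- continuity of h on [δ, 1]
  have hhcont : ContinuousOn (fun φ : ℝ => g (ε + f (1 - φ))) (Set.Icc δ 1) := by
    have c1 : ContinuousOn (fun φ : ℝ => 1 - φ) (Set.Icc δ 1) :=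
      (continuous_const.sub continuous_id).continuousOn
    have c2 : ContinuousOn (fun φ : ℝ => ε + f (1 - φ)) (Set.Icc δ 1) := by
      apply continuousOn_const.add
      exact hfc.comp c1 (fun x hx => (hdom x hx.1 hx.2).1)
    apply hgcont.comp c2
    intro x hx
    have h1 : 1 - x ∈ Set.Icc (0:ℝ) 1 := (hdom x hx.1 hx.2).1
    have h2 := (hdom x hx.1 hx.2).2
    have h3 := (hmap _ h1).1
    simp only [Set.mem_Icc]
    exact ⟨by linarith, h2.2⟩
  -- derivative of h at interior points, with expansion
  have hder : ∀ c : ℝ, δ < c → c < 1 →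
      HasDerivAt (fun φ : ℝ => g (ε + f (1 - φ)))
        (-(f' (1 - c) / f' (g (ε + f (1 - c))))) c ∧
      1 < f' (1 - c) / f' (g (ε + f (1 - c))) := by
    intro c hc0 hc1
    have hcm : 1 - c ∈ Set.Icc (0:ℝ) 1 := ⟨by linarith, by linarith⟩
    have hum := (hdom c hc0.le hc1.le).2
    set u := ε + f (1 - c) with hu
    have hu0 : 0 < u := by
      have := (hmap _ hcm).1; rw [hu]; linarith
    have hu1 : u < 1 := by
      have h1δI : (1 - δ) ∈ Set.Icc (0:ℝ) 1 := ⟨by linarith, by linarith⟩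
      have hlt : f (1 - c) < f (1 - δ) := hfmono hcm h1δI (by linarith)
      have : f (1 - δ) = 1 - ε := by rw [h1δ]; exact hfg _ h1εI
      rw [hu]; linarith
    have hguI := hgmem u (Set.Ioo_subset_Icc_self ⟨hu0, hu1⟩)
    have hgder : HasDerivAt g (f' (g u))⁻¹ u := by
      apply HasDerivAt.of_local_left_inverse (hgca u hu0 hu1)
        (hfd (g u) hguI) (ne_of_gt (hf'pos _ hguI))
      exact Filter.eventually_of_mem (Ioo_mem_nhds hu0 hu1)
        (fun y hy => hfg y (Set.Ioo_subset_Icc_self hy))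
    have d1 : HasDerivAt (fun φ : ℝ => 1 - φ) (-1) c := (hasDerivAt_id c).const_sub 1
    have d2 : HasDerivAt (fun φ : ℝ => f (1 - φ)) (f' (1 - c) * (-1)) c :=
      (hfd (1 - c) hcm).comp c d1
    have d3 : HasDerivAt (fun φ : ℝ => ε + f (1 - φ)) (f' (1 - c) * (-1)) c :=
      d2.const_add ε
    have d4 : HasDerivAt (fun φ : ℝ => g (ε + f (1 - φ)))
        ((f' (g u))⁻¹ * (f' (1 - c) * (-1))) c := hgder.comp c d3
    -- the ratio is > 1
    have hf0lt : 0 < f (1 - c) := by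
      have := hfmono h01 hcm (by linarith)
      rwa [hf0] at this
    have hgugt : 1 - c < g u := by
      by_contra hle
      push_neg at hle
      have hmono := hfmono.monotoneOn hguI hcm hle
      rw [hfg u (Set.Ioo_subset_Icc_self ⟨hu0, hu1⟩), hu] at hmono
      linarith
    have hf'lt : f' (g u) < f' (1 - c) := hf'anti hcm hguI hgugt
    have hf'gu : 0 < f' (g u) := hf'pos _ hguI
    constructor
    · have : (f' (g u))⁻¹ * (f' (1 - c) * (-1)) = -(f' (1 - c) / f' (g u)) := by
        field_simp
      rwa [this] at d4
    · exact (one_lt_div hf'gu).mpr hf'lt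
  -- expansion property
  have hexp : ∀ a b : ℝ, δ < a → a < b → b < 1 →
      b - a < g (ε + f (1 - a)) - g (ε + f (1 - b)) := by
    intro a b ha hab hb
    obtain ⟨c, hc, hcslope⟩ := exists_hasDerivAt_eq_slope
      (fun φ : ℝ => g (ε + f (1 - φ)))
      (fun c => -(f' (1 - c) / f' (g (ε + f (1 - c))))) hab
      (hhcont.mono (Set.Icc_subset_Icc ha.le hb.le))
      (fun x hx => (hder x (lt_trans ha hx.1) (lt_trans hx.2 hb)).1)
    have hr := (hder c (lt_trans ha hc.1) (lt_trans hc.2 hb)).2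
    have hba : (0:ℝ) < b - a := by linarith
    rw [eq_div_iff (ne_of_gt hba)] at hcslope
    nlinarith [hcslope]
  -- F strict mono on [δ,1]
  have hFmono : ∀ a b : ℝ, δ ≤ a → a < b → b ≤ 1 →
      a - g (ε + f (1 - a)) < b - g (ε + f (1 - b)) := by
    intro a b ha hab hb
    have := hanti a b ha hab hb
    linarith
  -- IVT : root of F
  have hFcont : ContinuousOn (fun φ : ℝ => φ - g (ε + f (1 - φ))) (Set.Icc δ ψ) :=
    (continuousOn_id.sub (hhcont.mono (Set.Icc_subset_Icc le_rfl hψ₂.le)))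
  have hivt := intermediate_value_Icc hψ₁.le hFcont
  have h0mem : (0:ℝ) ∈ Set.Icc (δ - g (ε + f (1 - δ))) (ψ - g (ε + f (1 - ψ))) := by
    rw [hval1, hψ]
    exact ⟨by linarith, by linarith⟩
  obtain ⟨φ₀, hφ₀mem, hφ₀⟩ := hivt h0mem
  simp only at hφ₀
  have hφ₀δ : φ₀ ≠ δ := by
    intro h; rw [h, hval1] at hφ₀; linarith
  have hφ₀ψ : φ₀ ≠ ψ := by
    intro h; rw [h, hψ] at hφ₀; linarith
  have hφ₀Ioo : φ₀ ∈ Set.Ioo δ ψ :=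
    ⟨lt_of_le_of_ne hφ₀mem.1 (Ne.symm hφ₀δ), lt_of_le_of_ne hφ₀mem.2 hφ₀ψ⟩
  have hfix : g (ε + f (1 - φ₀)) = φ₀ := by linarith
  -- uniqueness of root
  have huniq : ∀ x ∈ Set.Ioo δ ψ, x - g (ε + f (1 - x)) = 0 → x = φ₀ := by
    intro x hx hxr
    by_contra hne
    rcases lt_or_gt_of_ne hne with h | h
    · have := hFmono x φ₀ hx.1.le h (by linarith [hφ₀Ioo.2])
      rw [hxr] at this; linarith
    · have := hFmono φ₀ x hφ₀Ioo.1.le h (by linarith [hx.2])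
      rw [hxr] at this; linarith
  refine ⟨hval1, by rw [hval1]; linarith, by linarith, ?_, ?_⟩
  · exact ⟨φ₀, ⟨hφ₀Ioo, hφ₀⟩, fun x hx => huniq x hx.1 hx.2⟩
  · refine ⟨φ₀, ⟨hφ₀Ioo, by rw [hfix, hfix]⟩, ?_⟩
    intro x ⟨hx, hxfix⟩
    -- let y = h x; then h y = x
    set y := g (ε + f (1 - x)) with hy
    have hyδ : δ < y := by
      have := hanti x ψ hx.1.le hx.2 hψ₂.le
      rw [hψ] at this; exact this
    have hy1 : y < 1 := by
      have := hanti δ x le_rfl hx.1 (by linarith [hx.2])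
      rw [hval1] at this; exact this
    have hxy : y = x := by
      by_contra hne
      rcases lt_or_gt_of_ne hne with h | h
      · -- y < x : expansion on [y, x]
        have := hexp y x hyδ h (by linarith [hx.2])
        rw [hxfix, ← hy] at this
        linarith
      · -- x < y
        have := hexp x y hx.1 h hy1
        rw [hxfix, ← hy] at this
        linarith
    apply huniq x hx
    rw [← hy, hxy]
    ring
end

section
/- The unique fixed point φ̄ of the return map R = h ∘ h in the Mirollo–Strogatz two-oscillator model is repelling: |R′(φ̄)| > 1. -/
/-!
At a fixed point `φ̄` of the firing map `h(x) = g(ε + f(1 - x))`, with `g = f⁻¹` on `[0, 1]`, we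
have `f(φ̄) = ε + f(1 - φ̄) > f(1 - φ̄)`, so `1 - φ̄ < φ̄`. By the inverse function rule
`h'(φ̄) = -f'(1 - φ̄) / f'(φ̄)`, and since `f'` is strictly decreasing (`f'' < 0`) this has
absolute value `> 1`. Hence `R'(φ̄) = h'(φ̄)² > 1` for the return map `R = h ∘ h`.
-/

open Set Filter Topology

theorem strictMonoOn_of_hasDerivAt_pos {D : Set ℝ} (hD : Convex ℝ D) {f f' : ℝ → ℝ}
    (hf : ∀ x ∈ D, HasDerivAt f (f' x) x) (hf' : ∀ x ∈ D, 0 < f' x) : StrictMonoOn f D :=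
  strictMonoOn_of_hasDerivWithinAt_pos hD (fun x hx ↦ (hf x hx).continuousAt.continuousWithinAt)
    (fun x hx ↦ (hf x (interior_subset hx)).hasDerivWithinAt)
    (fun x hx ↦ hf' x (interior_subset hx))

theorem strictAntiOn_of_hasDerivAt_neg {D : Set ℝ} (hD : Convex ℝ D) {f f' : ℝ → ℝ}
    (hf : ∀ x ∈ D, HasDerivAt f (f' x) x) (hf' : ∀ x ∈ D, f' x < 0) : StrictAntiOn f D :=
  strictAntiOn_of_hasDerivWithinAt_neg hD (fun x hx ↦ (hf x hx).continuousAt.continuousWithinAt)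
    (fun x hx ↦ (hf x (interior_subset hx)).hasDerivWithinAt)
    (fun x hx ↦ hf' x (interior_subset hx))

theorem StrictMonoOn.of_rightInvOn {α β : Type*} [LinearOrder α] [LinearOrder β]
    {f : α → β} {g : β → α} {s : Set α} {t : Set β} (hf : StrictMonoOn f s)
    (hg : MapsTo g t s) (hfg : RightInvOn g f t) : StrictMonoOn g t := fun _ hy₁ _ hy₂ hlt ↦
  (hf.lt_iff_lt (hg hy₁) (hg hy₂)).1 (by rwa [hfg hy₁, hfg hy₂])

theorem HasDerivAt.of_invOn {f g : ℝ → ℝ} {s : Set ℝ} {x f'x : ℝ} (hinv : InvOn g f s s)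
    (hf_maps : MapsTo f s s) (hg_maps : MapsTo g s s) (hf_mono : StrictMonoOn f s)
    (hx : s ∈ 𝓝 x) (hfx : s ∈ 𝓝 (f x)) (hf : HasDerivAt f f'x x) (hf' : f'x ≠ 0) :
    HasDerivAt g f'x⁻¹ (f x) := by
  have hgf : g (f x) = x := hinv.1 (mem_of_mem_nhds hx)
  have hg_cont : ContinuousAt g (f x) := by
    refine (hf_mono.of_rightInvOn hg_maps hinv.2).continuousAt_of_image_mem_nhds hfx ?_
    rw [hgf]
    exact mem_of_superset hx fun z hz ↦ ⟨f z, hf_maps hz, hinv.1 hz⟩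
  exact HasDerivAt.of_local_left_inverse hg_cont (by rwa [hgf]) hf'
    (mem_of_superset hfx fun y hy ↦ hinv.2 hy)

/-- The map `h` of the two-oscillator Mirollo–Strogatz model, for the state function `f`, its
inverse `g` and the pulse strength `ε`. -/
def firingMap (f g : ℝ → ℝ) (ε x : ℝ) : ℝ := g (ε + f (1 - x))

theorem hasDerivAt_firingMap {f g : ℝ → ℝ} {f'φ f'ψ ε φ : ℝ}
    (hf : HasDerivAt f f'ψ (1 - φ)) (hg : HasDerivAt g f'φ⁻¹ (ε + f (1 - φ))) :
    HasDerivAt (firingMap f g ε) (-(f'ψ / f'φ)) φ := by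
  have hinner : HasDerivAt (fun x ↦ ε + f (1 - x)) (-f'ψ) φ := by
    simpa using (hf.comp φ ((hasDerivAt_id φ).const_sub 1)).const_add ε
  exact (hg.comp φ hinner).congr_deriv (by ring)

theorem stmt8_general (f g f' f'' : ℝ → ℝ) (ε δ ψ φbar : ℝ)
    (hfd : ∀ φ ∈ Set.Icc (0:ℝ) 1, HasDerivAt f (f' φ) φ)
    (hf'pos : ∀ φ ∈ Set.Icc (0:ℝ) 1, 0 < f' φ)
    (hfd2 : ∀ φ ∈ Set.Icc (0:ℝ) 1, HasDerivAt f' (f'' φ) φ)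
    (hf''neg : ∀ φ ∈ Set.Icc (0:ℝ) 1, f'' φ < 0)
    (hmap : ∀ φ ∈ Set.Icc (0:ℝ) 1, f φ ∈ Set.Icc (0:ℝ) 1)
    (hg : ∀ y ∈ Set.Icc (0:ℝ) 1, g y ∈ Set.Icc (0:ℝ) 1 ∧ f (g y) = y)
    (hgf : ∀ φ ∈ Set.Icc (0:ℝ) 1, g (f φ) = φ)
    (hε : ε ∈ Set.Ioo (0:ℝ) 1)
    (hδ : δ = 1 - g (1 - ε))
    (hψ₂ : ψ < 1)
    (hdom : φbar ∈ Set.Ioo δ ψ)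
    (hfix : g (ε + f (1 - φbar)) = φbar) :
    ∃ d : ℝ, HasDerivAt (fun x => g (ε + f (1 - g (ε + f (1 - x))))) d φbar ∧
      1 < |d| := by
  obtain ⟨hε₀, hε₁⟩ := hε
  have hf_mono := strictMonoOn_of_hasDerivAt_pos (convex_Icc 0 1) hfd hf'pos
  have hf'_anti := strictAntiOn_of_hasDerivAt_neg (convex_Icc 0 1) hfd2 hf''neg
  have hinv : InvOn g f (Icc 0 1) (Icc 0 1) := ⟨hgf, fun y hy ↦ (hg y hy).2⟩
  have hg₁ := hg (1 - ε) ⟨by linarith, by linarith⟩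
  have hφ : φbar ∈ Ioo 0 1 := ⟨by linarith [hdom.1, hg₁.1.2], hdom.2.trans hψ₂⟩
  have hφ' : φbar ∈ Icc 0 1 := Ioo_subset_Icc_self hφ
  have h1φ : 1 - φbar ∈ Icc 0 1 := ⟨by linarith [hφ.2], by linarith [hφ.1]⟩
  -- `δ < φbar` says `1 - φbar < g (1 - ε)`, i.e. `f (1 - φbar) < 1 - ε`
  have harg : ε + f (1 - φbar) ∈ Ioo 0 1 := by
    have hlt := hf_mono h1φ hg₁.1 (by linarith [hdom.1])
    exact ⟨by linarith [(hmap _ h1φ).1], by linarith [hg₁.2]⟩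
  have hfφ : f φbar = ε + f (1 - φbar) := by
    simpa only [hfix] using (hg _ (Ioo_subset_Icc_self harg)).2
  have hhalf : 1 - φbar < φbar := (hf_mono.lt_iff_lt h1φ hφ').1 (by linarith)
  have hg_deriv := HasDerivAt.of_invOn hinv hmap (fun y hy ↦ (hg y hy).1) hf_mono
    (Icc_mem_nhds hφ.1 hφ.2) (hfφ ▸ Icc_mem_nhds harg.1 harg.2) (hfd _ hφ')
    (hf'pos _ hφ').ne'
  have hh_deriv := hasDerivAt_firingMap (hfd _ h1φ) (hfφ ▸ hg_deriv)
  refine ⟨_, hh_deriv.iterate φbar hfix 2, ?_⟩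
  have hslope : 1 < f' (1 - φbar) / f' φbar :=
    (one_lt_div (hf'pos _ hφ')).2 (hf'_anti h1φ hφ' hhalf)
  rw [abs_pow, abs_neg, abs_of_pos (one_pos.trans hslope)]
  exact one_lt_pow₀ hslope two_ne_zero

/-- Mirollo–Strogatz: the unique fixed point `φ̄` (with `h(φ̄) = φ̄`) of the return
map `R = h ∘ h` is repelling: `|R′(φ̄)| > 1`. -/
theorem stmt8 (f g f' f'' : ℝ → ℝ) (ε δ ψ φbar : ℝ)
    (hf0 : f 0 = 0) (hf1 : f 1 = 1)
    (hfd : ∀ φ ∈ Set.Icc (0:ℝ) 1, HasDerivAt f (f' φ) φ)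
    (hf'pos : ∀ φ ∈ Set.Icc (0:ℝ) 1, 0 < f' φ)
    (hfd2 : ∀ φ ∈ Set.Icc (0:ℝ) 1, HasDerivAt f' (f'' φ) φ)
    (hf''neg : ∀ φ ∈ Set.Icc (0:ℝ) 1, f'' φ < 0)
    (hmap : ∀ φ ∈ Set.Icc (0:ℝ) 1, f φ ∈ Set.Icc (0:ℝ) 1)
    (hg : ∀ y ∈ Set.Icc (0:ℝ) 1, g y ∈ Set.Icc (0:ℝ) 1 ∧ f (g y) = y)
    (hgf : ∀ φ ∈ Set.Icc (0:ℝ) 1, g (f φ) = φ)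
    (hε : ε ∈ Set.Ioo (0:ℝ) 1)
    (hδ : δ = 1 - g (1 - ε))
    (hψ₁ : δ < ψ) (hψ₂ : ψ < 1)
    (hψ : g (ε + f (1 - ψ)) = δ)
    (hdom : φbar ∈ Set.Ioo δ ψ)
    (hfix : g (ε + f (1 - φbar)) = φbar) :
    ∃ d : ℝ, HasDerivAt (fun x => g (ε + f (1 - g (ε + f (1 - x))))) d φbar ∧
      1 < |d| :=
  stmt8_general f g f' f'' ε δ ψ φbar hfd hf'pos hfd2 hf''neg hmap hg hgf hε hδ hψ₂ hdom hfix
end
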